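/- arXiv:2005.10873 — 4 statements merged into one kernel-verified Lean document; each statement's English description precedes it below -/
import Mathlib

section
/- Let P be a finite partially ordered set whose height (the maximum cardinality of a chain in P) is h. Then P can be partitioned into h antichains, i.e., there exists a family of h pairwise disjoint nonempty antichains of P whose union is all of P. (Mirsky's theorem; part (a) of the paper's Theorem 3.) -/
/-!
The antichains are the level sets of the height function, `Order.height x` being the length of
the longest strictly increasing sequence ending at `x`. An element of height `k` tops a chain of
`k + 1` elements, so all heights are below `h`. Height is strictly monotone, so each level set is
an antichain and a chain meets each level at most once; a chain of `h` elements therefore reaches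
height `h - 1`, and as heights are closed downwards, all `h` levels are nonempty.
-/

open Finset

lemma IsChain.card_le_of_strictMono {α : Type*} [PartialOrder α] {f : α → ℕ}
    (hf : StrictMono f) {c : Finset α} (hc : IsChain (· ≤ ·) (c : Set α)) {n : ℕ}
    (hn : ∀ x ∈ c, f x < n) : #c ≤ n := by
  calc #c ≤ #(range n) := by
        refine card_le_card_of_injOn f (fun x hx ↦ mem_range.2 (hn x hx)) ?_
        intro x hx y hy hxy
        by_contra hne
        rcases hc hx hy hne with hle | hle
        · exact (hf (hle.lt_of_ne hne)).ne hxy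
        · exact (hf (hle.lt_of_ne (Ne.symm hne))).ne' hxy
    _ = n := card_range n

namespace Order

variable {P : Type*} [Fintype P] [PartialOrder P]

lemma height_lt_top_of_fintype (x : P) : height x < ⊤ :=
  (height_le fun p _ ↦ ENat.natCast_le_natCast.2 p.length_lt_card.le).trans_lt
    (ENat.natCast_lt_top _)

noncomputable def natHeight (x : P) : ℕ := (height x).toNat

lemma natCast_natHeight (x : P) : (natHeight x : ℕ∞) = height x :=
  ENat.natCast_toNat (height_lt_top_of_fintype x).ne

lemma natHeight_strictMono : StrictMono (natHeight : P → ℕ) := fun x y hxy ↦ by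
  have := height_strictMono hxy (height_lt_top_of_fintype x)
  rwa [← natCast_natHeight, ← natCast_natHeight, ENat.natCast_lt_natCast] at this

lemma exists_le_natHeight_eq {x : P} {n : ℕ} (hn : n ≤ natHeight x) :
    ∃ y ≤ x, natHeight y = n := by
  rcases hn.eq_or_lt with rfl | hlt
  · exact ⟨x, le_rfl, rfl⟩
  · have hlt : (n : ℕ∞) < height x := by rwa [← natCast_natHeight, ENat.natCast_lt_natCast]
    obtain ⟨y, hyx, hy⟩ := (coe_lt_height_iff (height_lt_top_of_fintype x)).1 hlt
    exact ⟨y, hyx.le, by rw [natHeight, hy, ENat.toNat_natCast]⟩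

lemma exists_isChain_card_eq_natHeight_add_one (x : P) :
    ∃ c : Finset P, IsChain (· ≤ ·) (c : Set P) ∧ #c = natHeight x + 1 := by
  classical
  obtain ⟨p, -, hlen⟩ := exists_series_of_height_eq_coe x (natCast_natHeight x).symm
  refine ⟨univ.image p, ?_, ?_⟩
  · simpa using p.monotone.isChain_range
  · rw [card_image_of_injective _ p.strictMono.injective, card_univ, Fintype.card_fin, hlen]

end Order

open Order in
/-- Mirsky's theorem: a finite poset of height `h` (the maximum cardinality of a chain)
can be partitioned into `h` pairwise disjoint nonempty antichains. -/
theorem mirsky_partition_into_antichains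
    {P : Type*} [Fintype P] [PartialOrder P] (h : ℕ)
    (hh : IsGreatest
      {n : ℕ | ∃ c : Finset P, IsChain (· ≤ ·) (c : Set P) ∧ c.card = n} h) :
    ∃ A : Fin h → Finset P,
      (∀ i, (A i).Nonempty) ∧
      (∀ i, IsAntichain (· ≤ ·) ((A i : Set P))) ∧
      (∀ i j, i ≠ j → Disjoint (A i) (A j)) ∧
      (∀ x : P, ∃ i, x ∈ A i) := by
  classical
  have height_lt : ∀ x : P, natHeight x < h := fun x ↦ by
    obtain ⟨c, hc, hcard⟩ := exists_isChain_card_eq_natHeight_add_one x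
    have := hh.2 ⟨c, hc, hcard⟩
    omega
  have height_surj : ∀ i < h, ∃ x : P, natHeight x = i := by
    intro i hi
    obtain ⟨c, hc, hcard⟩ := hh.1
    obtain ⟨t, -, ht⟩ : ∃ t ∈ c, h - 1 ≤ natHeight t := by
      by_contra! hsmall
      have := hc.card_le_of_strictMono natHeight_strictMono hsmall
      omega
    obtain ⟨x, -, hx⟩ := exists_le_natHeight_eq (n := i) (by omega : i ≤ natHeight t)
    exact ⟨x, hx⟩
  refine ⟨fun i ↦ {x | natHeight x = i}, fun i ↦ ?_, fun i ↦ ?_, fun i j hij ↦ ?_,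
    fun x ↦ ⟨⟨natHeight x, height_lt x⟩, by simp⟩⟩
  · obtain ⟨x, hx⟩ := height_surj i i.2
    exact ⟨x, by simpa using hx⟩
  · intro x hx y hy hne hle
    simp only [coe_filter, mem_univ, true_and, Set.mem_ofPred_eq] at hx hy
    exact (natHeight_strictMono (hle.lt_of_ne hne)).ne (hx.trans hy.symm)
  · refine disjoint_filter.2 fun x _ hxi hxj ↦ hij (Fin.ext ?_)
    rw [← hxi, ← hxj]
end

section
/- Let P be a finite partially ordered set whose width (the maximum cardinality of an antichain in P) is w. Then P can be partitioned into w chains, i.e., there exists a family of w pairwise disjoint nonempty chains of P whose union is all of P. (Dilworth's theorem; part (b) of the paper's Theorem 3.) -/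
/-!
Galvin's induction. Remove a maximal element `a` and partition the rest into chains together
with an antichain of the same size `k`. Every antichain of size `k` meets every chain, so the
elements that are topmost in their chain among all elements of such antichains form again an
antichain `T` of size `k`. If `a` lies above no element of `T`, then `T ∪ {a}` is an antichain
and `{a}` a new chain. Otherwise `a ≥ x ∈ T`; adding `a` to the part of the chain of `x` below
`x` gives a chain `K` that meets every antichain of size `k`, so the complement of `K` has width
less than `k` and, by induction, is covered by fewer than `k` chains.
-/

open Finset

section

variable {α : Type*} [PartialOrder α]

lemma Finset.exists_isGreatest_of_isChain {s : Finset α} (hs : IsChain (· ≤ ·) (s : Set α))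
    (hne : s.Nonempty) : ∃ m, IsGreatest (s : Set α) m := by
  obtain ⟨m, hm⟩ := s.exists_maximal hne
  refine ⟨m, hm.1, fun y hy => ?_⟩
  rcases eq_or_ne y m with rfl | hym
  · exact le_rfl
  · exact (hs hy hm.1 hym).elim id (hm.2 hy)

lemma IsAntichain.insert_of_maximal {s t : Set α} {a : α} (ht : IsAntichain (· ≤ ·) t)
    (hts : t ⊆ s) (ha : Maximal (· ∈ s) a) (hta : ∀ x ∈ t, ¬x ≤ a) :
    IsAntichain (· ≤ ·) (insert a t) :=
  ht.insert (fun b hb _ => hta b hb) fun b hb _ hab => hta b hb (ha.2 (hts hb) hab)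

namespace Finpartition

variable [DecidableEq α] {s : Finset α}

def IsChainPartition (Q : Finpartition s) : Prop :=
  ∀ c ∈ Q.parts, IsChain (· ≤ ·) (c : Set α)

/-- For a chain partition `Q` these are exactly the maximum antichains of `s`
(see `IsChainPartition.card_le_card_parts`). -/
def IsLargeAntichain (Q : Finpartition s) (A : Finset α) : Prop :=
  A ⊆ s ∧ IsAntichain (· ≤ ·) (A : Set α) ∧ #Q.parts ≤ #A

namespace IsChainPartition

variable {Q : Finpartition s} {A : Finset α}

lemma injOn_part (hQ : Q.IsChainPartition) (hA : A ⊆ s)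
    (hAnti : IsAntichain (· ≤ ·) (A : Set α)) : Set.InjOn Q.part A := by
  intro x hx y hy hxy
  have hyx : y ∈ Q.part x := hxy ▸ Q.mem_part (hA hy)
  exact ((hQ _ (Q.part_mem.2 (hA hx))).total (Q.mem_part (hA hx)) hyx).elim
    (hAnti.eq hx hy) fun h => (hAnti.eq hy hx h).symm

lemma card_le_card_parts (hQ : Q.IsChainPartition) (hA : A ⊆ s)
    (hAnti : IsAntichain (· ≤ ·) (A : Set α)) : #A ≤ #Q.parts :=
  card_le_card_of_injOn Q.part (fun _ hx => Q.part_mem.2 (hA hx)) (hQ.injOn_part hA hAnti)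

lemma exists_mem_of_isLargeAntichain (hQ : Q.IsChainPartition) (hA : Q.IsLargeAntichain A)
    {c : Finset α} (hc : c ∈ Q.parts) : ∃ x ∈ A, x ∈ c := by
  obtain ⟨hAs, hAnti, hcard⟩ := hA
  obtain ⟨x, hx, rfl⟩ := surjOn_of_injOn_of_card_le Q.part (fun _ hx => Q.part_mem.2 (hAs hx))
    (hQ.injOn_part hAs hAnti) hcard hc
  exact ⟨x, hx, Q.mem_part (hAs hx)⟩

lemma exists_topmost_isLargeAntichain (hQ : Q.IsChainPartition)
    (hA : ∃ A, Q.IsLargeAntichain A) :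
    ∃ T, Q.IsLargeAntichain T ∧
      ∀ x ∈ T, ∀ B, Q.IsLargeAntichain B → ∀ y ∈ B, y ∈ Q.part x → y ≤ x := by
  classical
  let M := s.filter fun y => ∃ B, Q.IsLargeAntichain B ∧ y ∈ B
  let T := M.filter fun x => ∀ y ∈ M, y ∈ Q.part x → y ≤ x
  have hMs : M ⊆ s := filter_subset _ _
  have hTM : T ⊆ M := filter_subset _ _
  have mem_M {B : Finset α} (hB : Q.IsLargeAntichain B) {y : α} (hy : y ∈ B) : y ∈ M :=
    mem_filter.2 ⟨hB.1 hy, B, hB, hy⟩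
  have le_of_mem_T {x y : α} (hx : x ∈ T) (hy : y ∈ M) (hyx : y ∈ Q.part x) : y ≤ x :=
    (mem_filter.1 hx).2 y hy hyx
  refine ⟨T, ⟨hTM.trans hMs, ?_, ?_⟩, fun x hx B hB y hy => le_of_mem_T hx (mem_M hB hy)⟩
  · intro x hx z hz hxz hle
    obtain ⟨B, hB, hzB⟩ := (mem_filter.1 (hTM hz)).2
    obtain ⟨y, hyB, hyx⟩ :=
      hQ.exists_mem_of_isLargeAntichain hB (Q.part_mem.2 (hMs (hTM hx)))
    have hyz : y = z := hB.2.1.eq hyB hzB ((le_of_mem_T hx (mem_M hB hyB) hyx).trans hle)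
    exact hxz (hle.antisymm (le_of_mem_T hx (hTM hz) (hyz ▸ hyx)))
  · suffices Q.parts ⊆ T.image Q.part from (card_le_card this).trans card_image_le
    intro c hc
    obtain ⟨A, hA⟩ := hA
    obtain ⟨y, hyA, hyc⟩ := hQ.exists_mem_of_isLargeAntichain hA hc
    obtain ⟨x, hx, hxtop⟩ := exists_isGreatest_of_isChain (s := c ∩ M)
      ((hQ c hc).mono (coe_subset.2 inter_subset_left)) ⟨y, mem_inter.2 ⟨hyc, mem_M hA hyA⟩⟩
    rw [coe_inter, Set.mem_inter_iff] at hx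
    have hpart : Q.part x = c := Q.part_eq_of_mem hc hx.1
    exact mem_image.2 ⟨x, mem_filter.2 ⟨hx.2, fun y hy hyx =>
      hxtop (mem_coe.2 (mem_inter.2 ⟨hpart ▸ hyx, hy⟩))⟩, hpart⟩

lemma card_lt_card_parts_of_forall_mem_part_not_le (hQ : Q.IsChainPartition) {x : α}
    (hx : x ∈ s) (htop : ∀ B, Q.IsLargeAntichain B → ∀ y ∈ B, y ∈ Q.part x → y ≤ x)
    (hA : A ⊆ s) (hAnti : IsAntichain (· ≤ ·) (A : Set α))
    (hAx : ∀ y ∈ A, y ∈ Q.part x → ¬y ≤ x) : #A < #Q.parts := by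
  by_contra! hcard
  have hA' : Q.IsLargeAntichain A := ⟨hA, hAnti, hcard⟩
  obtain ⟨y, hyA, hyx⟩ := hQ.exists_mem_of_isLargeAntichain hA' (Q.part_mem.2 hx)
  exact hAx y hyA hyx (htop A hA' y hyA hyx)

end IsChainPartition

lemma exists_isChainPartition_of_insert_chain {K : Finset α} {Q : Finpartition (s \ K)}
    (hQ : Q.IsChainPartition) (hK : IsChain (· ≤ ·) (K : Set α)) (hKne : K.Nonempty)
    (hKs : K ⊆ s) : ∃ R : Finpartition s, R.IsChainPartition ∧ #R.parts = #Q.parts + 1 := by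
  refine ⟨Q.extend hKne.ne_empty disjoint_sdiff_self_left (sdiff_union_of_subset hKs), ?_,
    card_extend _ _ _⟩
  intro c hc
  rcases mem_insert.1 hc with rfl | hc
  exacts [hK, hQ c hc]

theorem exists_isChainPartition_isLargeAntichain (s : Finset α) :
    ∃ Q : Finpartition s, Q.IsChainPartition ∧ ∃ A, Q.IsLargeAntichain A := by
  classical
  induction s using Finset.strongInduction with | H s ih =>
  rcases s.eq_empty_or_nonempty with rfl | hs
  · exact ⟨Finpartition.empty _, by simp [IsChainPartition], ∅, by simp [IsLargeAntichain]⟩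
  obtain ⟨a, ha⟩ := s.exists_maximal hs
  have has : {a} ⊆ s := singleton_subset_iff.2 ha.1
  obtain ⟨Q, hQ, A, hAs, hA, hQA⟩ := ih (s \ {a}) (sdiff_ssubset has (singleton_nonempty a))
  obtain ⟨T, ⟨hTs, hT, hQT⟩, htop⟩ :=
    hQ.exists_topmost_isLargeAntichain ⟨A, hAs, hA, hQA⟩
  by_cases hTa : ∃ x ∈ T, x ≤ a
  · obtain ⟨x, hxT, hxa⟩ := hTa
    let K := insert a ((Q.part x).filter (· ≤ x))
    have hKs : K ⊆ s :=
      insert_subset ha.1 ((filter_subset _ _).trans ((Q.part_subset x).trans sdiff_subset))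
    have hK : IsChain (· ≤ ·) (K : Set α) := by
      rw [coe_insert]
      exact ((hQ _ (Q.part_mem.2 (hTs hxT))).mono (coe_subset.2 (filter_subset _ _))).insert
        fun b hb _ => Or.inr ((mem_filter.1 hb).2.trans hxa)
    obtain ⟨Q', hQ', A', hA's, hA', hQA'⟩ :=
      ih (s \ K) (sdiff_ssubset hKs (insert_nonempty _ _))
    have hA'Q : #A' < #Q.parts :=
      hQ.card_lt_card_parts_of_forall_mem_part_not_le (hTs hxT) (htop x hxT)
        (hA's.trans (sdiff_subset_sdiff le_rfl (singleton_subset_iff.2 (mem_insert_self _ _)))) hA'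
        fun y hyA' hyx hyle =>
          (mem_sdiff.1 (hA's hyA')).2 (mem_insert_of_mem (mem_filter.2 ⟨hyx, hyle⟩))
    obtain ⟨R, hR, hRQ'⟩ :=
      exists_isChainPartition_of_insert_chain hQ' hK (insert_nonempty _ _) hKs
    exact ⟨R, hR, A, hAs.trans sdiff_subset, hA, by omega⟩
  · push Not at hTa
    obtain ⟨R, hR, hRQ⟩ :=
      exists_isChainPartition_of_insert_chain hQ (by simp) (singleton_nonempty a) has
    have haT : a ∉ T := fun h => by simpa using hTs h
    have hTs' : T ⊆ s := hTs.trans sdiff_subset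
    refine ⟨R, hR, insert a T, insert_subset ha.1 hTs', ?_, ?_⟩
    · rw [coe_insert]
      exact hT.insert_of_maximal (coe_subset.2 hTs') ha hTa
    · rw [card_insert_of_notMem haT]
      omega

end Finpartition

end

/-- Dilworth's theorem: a finite poset of width `w` (the maximum cardinality of an antichain)
can be partitioned into `w` pairwise disjoint nonempty chains. -/
theorem dilworth_partition_into_chains
    {P : Type*} [Fintype P] [PartialOrder P] (w : ℕ)
    (hw : IsGreatest
      {n : ℕ | ∃ a : Finset P, IsAntichain (· ≤ ·) (a : Set P) ∧ a.card = n} w) :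
    ∃ C : Fin w → Finset P,
      (∀ i, (C i).Nonempty) ∧
      (∀ i, IsChain (· ≤ ·) ((C i : Set P))) ∧
      (∀ i j, i ≠ j → Disjoint (C i) (C j)) ∧
      (∀ x : P, ∃ i, x ∈ C i) := by
  classical
  obtain ⟨Q, hQ, A, -, hA, hQA⟩ :=
    Finpartition.exists_isChainPartition_isLargeAntichain (univ : Finset P)
  have hcard : #Q.parts = w := by
    refine le_antisymm (hQA.trans (hw.2 ⟨A, hA, rfl⟩)) ?_
    obtain ⟨B, hB, rfl⟩ := hw.1
    exact hQ.card_le_card_parts (subset_univ B) hB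
  let e := Q.parts.equivFinOfCardEq hcard
  refine ⟨fun i => e.symm i, fun i => Q.nonempty_of_mem_parts (e.symm i).2,
    fun i => hQ _ (e.symm i).2, fun i j hij => Q.disjoint (e.symm i).2 (e.symm j).2 ?_,
    fun x => ?_⟩
  · exact fun h => hij (e.symm.injective (Subtype.ext h))
  · obtain ⟨c, hc, hx⟩ := Q.exists_mem (mem_univ x)
    exact ⟨e ⟨c, hc⟩, by simpa using hx⟩
end

section
/- Let ≤ be a partial order on a finite set P of cardinality n ≥ 1. Then there exists a family of at most n linear extensions of ≤ whose intersection is ≤, i.e., linear orders ≤₁, …, ≤ₖ on P with k ≤ n, each extending ≤, such that for all x, y ∈ P, x ≤ y if and only if x ≤ᵢ y for every i. (Dushnik and Miller's theorem that the order dimension of a finite partially ordered set of size n is finite and at most n.) -/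
/-- `r` is a linear extension of the partial order `≤` on `α`:
it is a reflexive, antisymmetric, transitive, total relation extending `≤`. -/
def IsLinearExtension {α : Type*} [PartialOrder α] (r : α → α → Prop) : Prop :=
  (∀ x, r x x) ∧
  (∀ x y, r x y → r y x → x = y) ∧
  (∀ x y z, r x y → r y z → r x z) ∧
  (∀ x y, r x y ∨ r y x) ∧
  (∀ x y : α, x ≤ y → r x y)

/-- Dushnik–Miller: a partial order on a finite set of cardinality `n ≥ 1` is the
intersection of at most `n` of its linear extensions. -/
theorem orderDim_le_card
    {P : Type*} [Fintype P] [PartialOrder P] (n : ℕ)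
    (hn : Fintype.card P = n) (hn1 : 1 ≤ n) :
    ∃ (k : ℕ) (f : Fin k → (P → P → Prop)),
      k ≤ n ∧
      (∀ i, IsLinearExtension (f i)) ∧
      (∀ x y : P, x ≤ y ↔ ∀ i, f i x y) := by
  classical
  have key : ∀ a : P, ∃ s : P → P → Prop,
      IsLinearExtension s ∧ ∀ x, ¬ x ≤ a → s a x := by
    intro a
    set r : P → P → Prop := fun x y => x ≤ y ∨ (x ≤ a ∧ ¬ y ≤ a) with hr
    haveI : IsPartialOrder P r := by
      refine { refl := fun x => Or.inl le_rfl, trans := ?_, antisymm := ?_ }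
      · rintro x y z (hxy | ⟨hxa, hya⟩) (hyz | ⟨hya', hza⟩)
        · exact Or.inl (hxy.trans hyz)
        · exact Or.inr ⟨hxy.trans hya', hza⟩
        · exact Or.inr ⟨hxa, fun hz => hya (hyz.trans hz)⟩
        · exact absurd hya' hya
      · rintro x y (hxy | ⟨hxa, hya⟩) (hyx | ⟨hya', hxa'⟩)
        · exact le_antisymm hxy hyx
        · exact absurd (hxy.trans hya') hxa'
        · exact absurd (hyx.trans hxa) hya
        · exact absurd hya' hya
    obtain ⟨s, hs, hrs⟩ := extend_partialOrder r
    refine ⟨s, ⟨fun x => hs.1.1.1.refl x, fun x y h1 h2 => hs.1.2.antisymm _ _ h1 h2,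
      fun x y z h1 h2 => hs.1.1.2.trans _ _ _ h1 h2, fun x y => hs.2.total x y,
      fun x y h => hrs _ _ (Or.inl h)⟩, fun x hx => hrs _ _ (Or.inr ⟨le_rfl, hx⟩)⟩
  choose s hs1 hs2 using key
  have e : Fin n ≃ P := (Fintype.equivFinOfCardEq hn).symm
  refine ⟨n, fun i => s (e i), le_rfl, fun i => hs1 _, fun x y => ?_⟩
  constructor
  · intro hxy i
    exact (hs1 (e i)).2.2.2.2 x y hxy
  · intro h
    by_contra hxy
    have h1 : s y y x := hs2 y x hxy
    have h2 : s y x y := by simpa using h (e.symm y)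
    exact hxy ((hs1 y).2.1 x y h2 h1 ▸ le_rfl)
end

section
/- Let ≤ be a partial order on a nonempty set P (finite or infinite). Then there exists a family of linear extensions of ≤, indexed by a set of cardinality at most the cardinality of P, whose intersection is ≤: for all x, y ∈ P, x ≤ y if and only if x ≤ᵢ y for every index i. (Hiraguchi's theorem that the order dimension of a partially ordered set is no greater than its size, for finite or transfinite size.) -/
universe u

lemma exists_ext {P : Type u} [PartialOrder P] (p : P) :
    ∃ s : P → P → Prop, IsLinearExtension s ∧ ∀ q, ¬ p ≤ q → s q p := by
  classical
  let r : P → P → Prop := fun x y => x ≤ y ∨ (¬ p ≤ x ∧ p ≤ y)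
  have hpo : IsPartialOrder P r := by
    refine { refl := fun x => Or.inl le_rfl, trans := ?_, antisymm := ?_ }
    · intro x y z hxy hyz
      rcases hxy with hxy | ⟨hnx, hpy⟩
      · rcases hyz with hyz | ⟨hny, hpz⟩
        · exact Or.inl (hxy.trans hyz)
        · exact Or.inr ⟨fun h => hny (h.trans hxy), hpz⟩
      · rcases hyz with hyz | ⟨hny, hpz⟩
        · exact Or.inr ⟨hnx, hpy.trans hyz⟩
        · exact Or.inr ⟨hnx, hpz⟩
    · intro x y hxy hyx
      rcases hxy with hxy | ⟨hnx, hpy⟩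
      · rcases hyx with hyx | ⟨hny, hpx⟩
        · exact le_antisymm hxy hyx
        · exact absurd (hpx.trans hxy) hny
      · rcases hyx with hyx | ⟨hny, hpx⟩
        · exact absurd (hpy.trans hyx) hnx
        · exact absurd hpx hnx
  haveI : IsRefl P r := ⟨fun x => Or.inl le_rfl⟩
  obtain ⟨s, hs, hrs⟩ := extend_partialOrder r
  refine ⟨s, ⟨fun x => (hs.total x x).elim id id,
    fun x y h1 h2 => hs.antisymm x y h1 h2,
    fun x y z h1 h2 => hs.trans x y z h1 h2,
    fun x y => hs.total x y,
    fun x y h => hrs _ _ (Or.inl h)⟩,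
    fun q hq => hrs _ _ (Or.inr ⟨hq, le_rfl⟩)⟩

/-- Hiraguchi: a partial order on a nonempty set `P` (finite or infinite) is the
intersection of a family of its linear extensions indexed by a set of cardinality
at most that of `P`. -/
theorem orderDim_le_mk
    {P : Type u} [PartialOrder P] [Nonempty P] :
    ∃ (ι : Type u) (f : ι → (P → P → Prop)),
      Cardinal.mk ι ≤ Cardinal.mk P ∧
      (∀ i, IsLinearExtension (f i)) ∧
      (∀ x y : P, x ≤ y ↔ ∀ i, f i x y) := by
  classical
  choose f hf hf2 using fun p : P => exists_ext p
  refine ⟨P, f, le_rfl, hf, fun x y => ⟨fun h i => (hf i).2.2.2.2 x y h, fun h => ?_⟩⟩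
  by_contra hxy
  have h1 : f x y x := hf2 x y hxy
  have h2 : f x x y := h x
  exact hxy ((hf x).2.1 x y h2 h1 ▸ le_rfl)
end
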